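/- Let φ : ℝ^{N+1} → ℝ be uniformly continuous and almost periodic in the m-th variable. Then from any real sequence (s_n) one can extract a subsequence (s_{n_k}) such that for every fixed (X_1,…,X_{m−1},X_{m+1},…,X_{N+1}), the sequence of functions X_m ↦ φ(X_1,…,X_m + s_{n_k},…,X_{N+1}) converges uniformly in X_m ∈ ℝ as k → ∞. -/
import Mathlib


open Filter Topology

noncomputable section

/-- A continuous function `φ : ℝ → ℝ` is almost periodic (Bochner's
characterization). -/
def AlmostPeriodic1 (φ : ℝ → ℝ) : Prop :=
  Continuous φ ∧ ∀ s : ℕ → ℝ, ∃ k : ℕ → ℕ, StrictMono k ∧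
    ∃ ψ : ℝ → ℝ, TendstoUniformly (fun n x => φ (x + s (k n))) ψ atTop

/-- The one-variable function obtained from `φ : ℝ^N × ℝ → ℝ` by letting the `m`-th
space-time variable vary while the other `N` coordinates are frozen at the values
prescribed by `(x, t)`. -/
def sliceVar {N : ℕ} (m : Fin (N + 1)) (φ : (Fin N → ℝ) → ℝ → ℝ)
    (x : Fin N → ℝ) (t : ℝ) : ℝ → ℝ :=
  if h : (m : ℕ) < N then fun s => φ (Function.update x (⟨(m : ℕ), h⟩ : Fin N) s) t
  else fun s => φ x s

/-- `φ` is almost periodic in the `m`-th variable: for every fixed choice of the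
other `N` coordinates, the one-variable function in the `m`-th variable is almost
periodic. -/
def APinVar {N : ℕ} (m : Fin (N + 1)) (φ : (Fin N → ℝ) → ℝ → ℝ) : Prop :=
  ∀ (x : Fin N → ℝ) (t : ℝ), AlmostPeriodic1 (sliceVar m φ x t)
/-- A uniformly continuous function on `ℝ^N × ℝ`. -/
def UC2 {N : ℕ} (φ : (Fin N → ℝ) → ℝ → ℝ) : Prop :=
  UniformContinuous fun p : (Fin N → ℝ) × ℝ => φ p.1 p.2

/-- Auxiliary: a slice is close to a nearby slice, uniformly. -/
lemma slice_close_aux {N : ℕ} (m : Fin (N + 1)) (φ : (Fin N → ℝ) → ℝ → ℝ)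
    {ε δ : ℝ} (_hδpos : 0 < δ)
    (hδ : ∀ a b : (Fin N → ℝ) × ℝ, dist a b < δ → dist (φ a.1 a.2) (φ b.1 b.2) < ε)
    (x x' : Fin N → ℝ) (t t' : ℝ)
    (h : dist ((x, t) : (Fin N → ℝ) × ℝ) (x', t') < δ) (r : ℝ) :
    dist (sliceVar m φ x t r) (sliceVar m φ x' t' r) < ε := by
  have hxx : dist x x' ≤ dist ((x, t) : (Fin N → ℝ) × ℝ) (x', t') := by
    rw [Prod.dist_eq]; exact le_max_left _ _
  have htt : dist t t' ≤ dist ((x, t) : (Fin N → ℝ) × ℝ) (x', t') := by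
    rw [Prod.dist_eq]; exact le_max_right _ _
  unfold sliceVar
  split_ifs with hm
  · have hup : dist (Function.update x (⟨(m : ℕ), hm⟩ : Fin N) r)
        (Function.update x' (⟨(m : ℕ), hm⟩ : Fin N) r) ≤ dist x x' := by
      rw [dist_pi_le_iff dist_nonneg]
      intro b
      by_cases hb : b = (⟨(m : ℕ), hm⟩ : Fin N)
      · subst hb; simp [Function.update_self, dist_nonneg]
      · rw [Function.update_of_ne hb, Function.update_of_ne hb]
        exact dist_le_pi_dist x x' b
    exact hδ (Function.update x (⟨(m : ℕ), hm⟩ : Fin N) r, t)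
      (Function.update x' (⟨(m : ℕ), hm⟩ : Fin N) r, t')
      (by rw [Prod.dist_eq]; exact lt_of_le_of_lt (max_le (hup.trans hxx) htt) h)
  · exact hδ (x, r) (x', r)
      (by rw [Prod.dist_eq]; simp only [dist_self]
          exact lt_of_le_of_lt (max_le hxx dist_nonneg) h)

/-- Generic diagonal extraction lemma. -/
lemma exists_diagonal {α : Type*} (P : ℕ → (ℕ → α) → Prop) (s : ℕ → α)
    (hP : ∀ (i : ℕ) (σ : ℕ → α), ∃ e : ℕ → ℕ, StrictMono e ∧ P i (σ ∘ e))
    (hstable : ∀ (i : ℕ) (σ : ℕ → α) (u : ℕ → ℕ),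
      Tendsto u atTop atTop → P i σ → P i (σ ∘ u))
    (hcongr : ∀ (i : ℕ) (σ σ' : ℕ → α),
      (∀ᶠ n in atTop, σ n = σ' n) → P i σ → P i σ') :
    ∃ k : ℕ → ℕ, StrictMono k ∧ ∀ i, P i (s ∘ k) := by
  choose e he hPe using hP
  let K : ℕ → ℕ → ℕ := fun i => Nat.rec (e 0 s) (fun j Kj => Kj ∘ e (j + 1) (s ∘ Kj)) i
  have hKmono : ∀ i, StrictMono (K i) := by
    intro i
    induction i with
    | zero => exact he 0 s
    | succ j ih => exact ih.comp (he _ _)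
  have hKP : ∀ i, P i (s ∘ K i) := by
    intro i
    cases i with
    | zero => exact hPe 0 s
    | succ j => exact hPe (j + 1) (s ∘ K j)
  have chain : ∀ n i a, i ≤ n → ∃ j, a ≤ j ∧ K n a = K i j := by
    intro n
    induction n with
    | zero =>
      intro i a h
      have : i = 0 := Nat.le_zero.mp h
      subst this; exact ⟨a, le_rfl, rfl⟩
    | succ nn ih =>
      intro i a h
      rcases eq_or_lt_of_le h with rfl | h'
      · exact ⟨a, le_rfl, rfl⟩
      · have h2 : i ≤ nn := Nat.lt_succ_iff.mp h'
        obtain ⟨j, hj, hEq⟩ := ih i (e (nn + 1) (s ∘ K nn) a) h2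
        exact ⟨j, le_trans (StrictMono.le_apply (he _ _)) hj, hEq⟩
  have hd : StrictMono (fun n => K n n) := by
    apply strictMono_nat_of_lt_succ
    intro n
    calc K n n < K n (n + 1) := (hKmono n) (Nat.lt_succ_self n)
    _ ≤ K n (e (n + 1) (s ∘ K n) (n + 1)) :=
        (hKmono n).monotone (StrictMono.le_apply (he _ _))
    _ = K (n + 1) (n + 1) := rfl
  refine ⟨fun n => K n n, hd, fun i => ?_⟩
  have hu : ∀ n, ∃ j, i ≤ n → (n ≤ j ∧ K n n = K i j) := by
    intro n
    by_cases h : i ≤ n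
    · obtain ⟨j, hj, hEq⟩ := chain n i n h
      exact ⟨j, fun _ => ⟨hj, hEq⟩⟩
    · exact ⟨0, fun h' => absurd h' h⟩
  choose u huu using hu
  have hut : Tendsto u atTop atTop := by
    apply tendsto_atTop_mono' atTop (f₁ := id)
    · filter_upwards [eventually_ge_atTop i] with n hn
      exact (huu n hn).1
    · exact tendsto_id
  have h1 : P i (s ∘ K i ∘ u) := hstable i (s ∘ K i) u hut (hKP i)
  apply hcongr i _ _ ?_ h1
  filter_upwards [eventually_ge_atTop i] with n hn
  show s (K i (u n)) = s (K n n)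
  rw [(huu n hn).2]

/-- **Lemma 4.3.**  Let `φ : ℝ^{N+1} → ℝ` be uniformly continuous and almost
periodic in the `m`-th variable.  Then from any real sequence `(s n)` one can
extract a subsequence `(s (k n))` such that, for every fixed choice of the other
`N` coordinates, the corresponding translated one-variable functions converge
uniformly on `ℝ`. -/
theorem lem_AA {N : ℕ} (φ : (Fin N → ℝ) → ℝ → ℝ) (m : Fin (N + 1))
    (huc : UC2 φ) (hap : APinVar m φ) :
    ∀ s : ℕ → ℝ, ∃ k : ℕ → ℕ, StrictMono k ∧
      ∀ (x : Fin N → ℝ) (t : ℝ), ∃ ψ : ℝ → ℝ,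
        TendstoUniformly (fun n r => sliceVar m φ x t (r + s (k n))) ψ atTop := by
  intro s
  set p : ℕ → (Fin N → ℝ) × ℝ := TopologicalSpace.denseSeq ((Fin N → ℝ) × ℝ) with hpdef
  have hp : DenseRange p := TopologicalSpace.denseRange_denseSeq _
  -- the property we diagonalize over
  set P : ℕ → (ℕ → ℝ) → Prop := fun i σ =>
    ∃ ψ : ℝ → ℝ,
      TendstoUniformly (fun n r => sliceVar m φ (p i).1 (p i).2 (r + σ n)) ψ atTop
    with hPdef
  have hdiag : ∃ k : ℕ → ℕ, StrictMono k ∧ ∀ i, P i (s ∘ k) := by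
    apply exists_diagonal
    · intro i σ
      obtain ⟨e, he, ψ, hψ⟩ := (hap (p i).1 (p i).2).2 σ
      exact ⟨e, he, ψ, hψ⟩
    · intro i σ u hu hPσ
      obtain ⟨ψ, hψ⟩ := hPσ
      refine ⟨ψ, fun U hU => hu.eventually (hψ U hU)⟩
    · intro i σ σ' heq hPσ
      obtain ⟨ψ, hψ⟩ := hPσ
      refine ⟨ψ, fun U hU => ?_⟩
      filter_upwards [hψ U hU, heq] with n h1 h2 r
      rw [← h2]
      exact h1 r
  obtain ⟨k, hk, hkP⟩ := hdiag
  refine ⟨k, hk, fun x t => ?_⟩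
  have hGc : UniformCauchySeqOn
      (fun n r => sliceVar m φ x t (r + s (k n))) atTop Set.univ := by
    rw [Metric.uniformCauchySeqOn_iff]
    intro ε hε
    obtain ⟨δ, hδ0, hδ⟩ := Metric.uniformContinuous_iff.mp huc (ε / 3) (by positivity)
    obtain ⟨i, hi⟩ := Metric.denseRange_iff.mp hp ((x, t) : (Fin N → ℝ) × ℝ) δ hδ0
    obtain ⟨ψ, hψ⟩ := hkP i
    have hC : UniformCauchySeqOn
        (fun n r => sliceVar m φ (p i).1 (p i).2 (r + s (k n))) atTop Set.univ :=
      (tendstoUniformlyOn_univ.mpr hψ).uniformCauchySeqOn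
    obtain ⟨M, hM⟩ := Metric.uniformCauchySeqOn_iff.mp hC (ε / 3) (by positivity)
    refine ⟨M, fun n hn n' hn' r _ => ?_⟩
    have h1 : dist (sliceVar m φ x t (r + s (k n)))
        (sliceVar m φ (p i).1 (p i).2 (r + s (k n))) < ε / 3 :=
      slice_close_aux m φ hδ0 hδ x (p i).1 t (p i).2 (by simpa using hi) _
    have h2 : dist (sliceVar m φ (p i).1 (p i).2 (r + s (k n)))
        (sliceVar m φ (p i).1 (p i).2 (r + s (k n'))) < ε / 3 :=
      hM n hn n' hn' r (Set.mem_univ r)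
    have h3 : dist (sliceVar m φ (p i).1 (p i).2 (r + s (k n')))
        (sliceVar m φ x t (r + s (k n'))) < ε / 3 := by
      rw [dist_comm]
      exact slice_close_aux m φ hδ0 hδ x (p i).1 t (p i).2 (by simpa using hi) _
    calc dist (sliceVar m φ x t (r + s (k n))) (sliceVar m φ x t (r + s (k n')))
        ≤ _ + _ + _ := dist_triangle4 _ (sliceVar m φ (p i).1 (p i).2 (r + s (k n)))
          (sliceVar m φ (p i).1 (p i).2 (r + s (k n'))) _
      _ < ε / 3 + ε / 3 + ε / 3 := by exact add_lt_add (add_lt_add h1 h2) h3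
      _ = ε := by ring
  have hptw : ∀ r : ℝ, ∃ L : ℝ,
      Tendsto (fun n => sliceVar m φ x t (r + s (k n))) atTop (𝓝 L) := by
    intro r
    apply cauchySeq_tendsto_of_complete
    rw [Metric.cauchySeq_iff]
    intro ε hε
    obtain ⟨M, hM⟩ := Metric.uniformCauchySeqOn_iff.mp hGc ε hε
    exact ⟨M, fun n hn n' hn' => hM n hn n' hn' r (Set.mem_univ r)⟩
  choose ψ hψ using hptw
  exact ⟨ψ, tendstoUniformlyOn_univ.mp
    (hGc.tendstoUniformlyOn_of_tendsto (fun r _ => hψ r))⟩
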